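/- For every integer n, BP(n)·(BP(n))*_i + BP(n−1)·(BP(n−1))*_i = 2·(−8·P(2n+2)·1 + Q(2n+2)·j). -/

import Mathlib

/-!
With `u = P n + P (n+2) j` and `v = P (n+1) + P (n+3) j` we have `BP n = u + v i` and
`(BP n)*_i = u - v i`, so `BP n (BP n)*_i = u² + v²`, which has only a real and a `j` part.
These parts are quadratic in Pell numbers and collapse by the Pell identities
`P m ² + P (m+1) ² = P (2m+1)`, `P (m+k+1) = P m P k + P (m+1) P (k+1)` and
`Q m = P (m+1) + P (m-1)`, each proved by checking it at `m = 0, 1`: a solution of the recurrence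
on all of `ℤ` is determined by two consecutive values.
-/

open scoped TensorProduct

noncomputable def bi : ℂ ⊗[ℝ] ℂ := Complex.I ⊗ₜ[ℝ] 1
noncomputable def bj : ℂ ⊗[ℝ] ℂ := (1 : ℂ) ⊗ₜ[ℝ] Complex.I
noncomputable def bij : ℂ ⊗[ℝ] ℂ := Complex.I ⊗ₜ[ℝ] Complex.I

/-- The bicomplex Pell number `BP n = P n + P (n+1) i + P (n+2) j + P (n+3) ij`. -/
noncomputable def BP (P : ℤ → ℤ) (n : ℤ) : ℂ ⊗[ℝ] ℂ :=
  (P n : ℝ) • (1 : ℂ ⊗[ℝ] ℂ) + (P (n + 1) : ℝ) • bi + (P (n + 2) : ℝ) • bj +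
    (P (n + 3) : ℝ) • bij

/-- The i-conjugate of the bicomplex Pell number. -/
noncomputable def BPconjI (P : ℤ → ℤ) (n : ℤ) : ℂ ⊗[ℝ] ℂ :=
  (P n : ℝ) • (1 : ℂ ⊗[ℝ] ℂ) - (P (n + 1) : ℝ) • bi + (P (n + 2) : ℝ) • bj -
    (P (n + 3) : ℝ) • bij

def IsPellRec {R : Type*} [Ring R] (X : ℤ → R) : Prop :=
  ∀ n, X (n + 2) = 2 * X (n + 1) + X n

namespace IsPellRec

section Ring

variable {R : Type*} [Ring R] {X Y : ℤ → R}

theorem comp_add_const (hX : IsPellRec X) (k : ℤ) : IsPellRec fun n ↦ X (n + k) := by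
  intro n
  simpa only [add_right_comm n _ k] using hX (n + k)

theorem add (hX : IsPellRec X) (hY : IsPellRec Y) : IsPellRec (X + Y) := by
  intro n
  simp only [Pi.add_apply, hX n, hY n]
  noncomm_ring

theorem mul_const (hX : IsPellRec X) (c : R) : IsPellRec fun n ↦ X n * c := by
  intro n
  simp only [hX n, add_mul, mul_assoc]

theorem ext (hX : IsPellRec X) (hY : IsPellRec Y) (h0 : X 0 = Y 0) (h1 : X 1 = Y 1) :
    X = Y := by
  have key : ∀ n : ℤ, X n = Y n ∧ X (n + 1) = Y (n + 1) := by
    intro n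
    induction n using Int.induction_on with
    | zero => exact ⟨h0, by simpa using h1⟩
    | succ k ih =>
      refine ⟨ih.2, ?_⟩
      rw [add_assoc, one_add_one_eq_two, hX, hY, ih.1, ih.2]
    | pred k ih =>
      have hX' := hX (-k - 1)
      have hY' := hY (-k - 1)
      simp only [sub_add_cancel, show -(k : ℤ) - 1 + 2 = -k + 1 by ring] at hX' hY' ih ⊢
      refine ⟨?_, ih.1⟩
      rw [eq_sub_of_add_eq' hX'.symm, eq_sub_of_add_eq' hY'.symm, ih.1, ih.2]
  funext n
  exact (key n).1

end Ring

section CommRing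

variable {R : Type*} [CommRing R] {X P Q : ℤ → R}

theorem add_add_one (hP : IsPellRec P) (h0 : P 0 = 0) (h1 : P 1 = 1) (m k : ℤ) :
    P (m + k + 1) = P m * P k + P (m + 1) * P (k + 1) := by
  have h2 : P 2 = 2 := by simpa [h0, h1] using hP 0
  have h := ext (Y := fun m ↦ P m * P k + P (m + 1) * P (k + 1)) (hP.comp_add_const (k + 1))
    ((hP.mul_const _).add ((hP.comp_add_const 1).mul_const _)) (by simp [h0, h1])
    (by
      show P (1 + (k + 1)) = P 1 * P k + P (1 + 1) * P (k + 1)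
      rw [show (1 : ℤ) + (k + 1) = k + 2 by ring, one_add_one_eq_two, hP k, h1, h2]
      ring)
  simpa only [add_assoc] using congrFun h m

theorem sixteen_mul (hX : IsPellRec X) (m : ℤ) :
    X (m + 3) + X (m + 1) - X (m - 1) - X (m - 3) = 16 * X m := by
  linear_combination (norm := ring_nf)
    hX (m - 3) - 2 * hX (m - 2) + 6 * hX (m - 1) + 2 * hX m + hX (m + 1)

theorem sq_add_sq (hP : IsPellRec P) (h0 : P 0 = 0) (h1 : P 1 = 1) (n : ℤ) :
    P n ^ 2 + P (n + 1) ^ 2 = P (2 * n + 1) := by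
  rw [two_mul, hP.add_add_one h0 h1]
  ring

theorem lucas_eq (hP : IsPellRec P) (h0 : P 0 = 0) (h1 : P 1 = 1) (hQ : IsPellRec Q)
    (hQ0 : Q 0 = 2) (hQ1 : Q 1 = 2) (m : ℤ) : Q m = P (m + 1) + P (m - 1) := by
  have hm1 : P (-1) = 1 := by simpa [h0, h1] using (hP (-1)).symm
  have h2 : P 2 = 2 := by simpa [h0, h1] using hP 0
  refine congrFun (hQ.ext ((hP.comp_add_const 1).add (hP.comp_add_const (-1))) ?_ ?_) m
  · norm_num [hQ0, h1, hm1]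
  · norm_num [hQ1, h0, h2]

end CommRing

end IsPellRec

theorem bi_mul_bi : bi * bi = -1 := by
  simp [bi, Algebra.TensorProduct.tmul_mul_tmul, Algebra.TensorProduct.one_def,
    TensorProduct.neg_tmul]

theorem bj_mul_bj : bj * bj = -1 := by
  simp [bj, Algebra.TensorProduct.tmul_mul_tmul, Algebra.TensorProduct.one_def,
    TensorProduct.tmul_neg]

theorem bi_mul_bj : bi * bj = bij := by
  simp [bi, bj, bij, Algebra.TensorProduct.tmul_mul_tmul]

theorem mul_conjI (a b c d : ℝ) :
    (a • (1 : ℂ ⊗[ℝ] ℂ) + b • bi + c • bj + d • bij) *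
        (a • (1 : ℂ ⊗[ℝ] ℂ) - b • bi + c • bj - d • bij) =
      (a ^ 2 + b ^ 2 - c ^ 2 - d ^ 2) • (1 : ℂ ⊗[ℝ] ℂ) + (2 * (a * c + b * d)) • bj := by
  have smul_def (r : ℝ) (x : ℂ ⊗[ℝ] ℂ) : r • x = algebraMap ℝ _ r * x :=
    Algebra.smul_def r x
  simp only [← bi_mul_bj, smul_def, map_add, map_sub, map_mul, map_pow, map_ofNat]
  set B := algebraMap ℝ (ℂ ⊗[ℝ] ℂ) b
  set C := algebraMap ℝ (ℂ ⊗[ℝ] ℂ) c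
  set D := algebraMap ℝ (ℂ ⊗[ℝ] ℂ) d
  linear_combination
    (C ^ 2 - D ^ 2 * bi * bi) * bj_mul_bj + (D ^ 2 - B ^ 2 - 2 * B * D * bj) * bi_mul_bi

theorem bicomplexPell_mul_conjI_add (P Q : ℤ → ℤ)
    (hP : ∀ n : ℤ, P (n + 2) = 2 * P (n + 1) + P n) (hP0 : P 0 = 0) (hP1 : P 1 = 1)
    (hQ : ∀ n : ℤ, Q (n + 2) = 2 * Q (n + 1) + Q n) (hQ0 : Q 0 = 2) (hQ1 : Q 1 = 2)
    (n : ℤ) :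
    BP P n * BPconjI P n + BP P (n - 1) * BPconjI P (n - 1) =
      (2 : ℝ) • ((-8 * (P (2 * n + 2) : ℝ)) • (1 : ℂ ⊗[ℝ] ℂ) +
        (Q (2 * n + 2) : ℝ) • bj) := by
  have hPr : IsPellRec fun m ↦ (P m : ℝ) := fun m ↦ by dsimp only; exact_mod_cast hP m
  have hQr : IsPellRec fun m ↦ (Q m : ℝ) := fun m ↦ by dsimp only; exact_mod_cast hQ m
  have hP0r : (P 0 : ℝ) = 0 := by simp [hP0]
  have hP1r : (P 1 : ℝ) = 1 := by simp [hP1]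
  have hsq (m : ℤ) : (P m : ℝ) ^ 2 + (P (m + 1) : ℝ) ^ 2 = P (2 * m + 1) :=
    hPr.sq_add_sq hP0r hP1r m
  have hadd (m k : ℤ) : (P (m + k + 1) : ℝ) = P m * P k + P (m + 1) * P (k + 1) :=
    hPr.add_add_one hP0r hP1r m k
  have hPQ (m : ℤ) : (Q m : ℝ) = P (m + 1) + P (m - 1) :=
    hPr.lucas_eq hP0r hP1r hQr (by simp [hQ0]) (by simp [hQ1]) m
  simp only [BP, BPconjI, sub_add_cancel, show n - 1 + 2 = n + 1 by ring,
    show n - 1 + 3 = n + 2 by ring, mul_conjI]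
  match_scalars
  · linear_combination (norm := ring_nf)
      hsq (n - 1) + hsq n - hsq (n + 1) - hsq (n + 2) - hPr.sixteen_mul (2 * n + 2)
  · linear_combination (norm := ring_nf)
      -2 * hadd n (n + 2) - 2 * hadd (n - 1) (n + 1) - 2 * hPQ (2 * n + 2)
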